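/- Assume the sequence of substitutions $(S_{a_n})$ is primitive. Then the dynamical system $(X_{\bar a},T)$, where $T$ is the translation action of $\mathbb R^d$, is minimal: for every $x\in X_{\bar a}$ the orbit $\{\vec t+x : \vec t\in\mathbb R^d\}$ is dense in $(X_{\bar a},d_T)$. -/

import Mathlib

open Filter Topology Set Metric MeasureTheory

noncomputable section

/-- Points of `ℝ^d`. -/
abbrev Pt (d : ℕ) := EuclideanSpace ℝ (Fin d)

/-- A patch is a collection of subsets of `ℝ^d` (intended: tiles with disjoint interiors). -/
abbrev Patch (d : ℕ) := Set (Set (Pt d))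

/-- Translation of a single tile. -/
def tileTrans {d : ℕ} (t : Pt d) (D : Set (Pt d)) : Set (Pt d) := (fun p => t + p) '' D

/-- Translation of a patch, `t + x`. -/
def patchTrans {d : ℕ} (t : Pt d) (x : Patch d) : Patch d := tileTrans t '' x

/-- A tile: compact, connected, and the closure of its interior. -/
def IsTile {d : ℕ} (D : Set (Pt d)) : Prop :=
  IsCompact D ∧ IsConnected D ∧ D = closure (interior D)

/-- A patch: a collection of tiles with pairwise disjoint interiors. -/
def IsPatch {d : ℕ} (x : Patch d) : Prop :=
  (∀ D ∈ x, IsTile D) ∧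
  ∀ D ∈ x, ∀ D' ∈ x, D ≠ D' → interior D ∩ interior D' = ∅

/-- The support of a patch: the union of its tiles. -/
def psupp {d : ℕ} (x : Patch d) : Set (Pt d) := ⋃ D ∈ x, D

/-- A tiling of `ℝ^d`: a patch whose support is all of `ℝ^d`. -/
def IsTiling {d : ℕ} (x : Patch d) : Prop := IsPatch x ∧ psupp x = univ

/-- The tiles occurring in tilings of `X`. -/
def TilesOf {d : ℕ} (X : Set (Patch d)) : Set (Set (Pt d)) := {D | ∃ x ∈ X, D ∈ x}

/-- `𝒫(X)`: the finite patches contained in tilings of `X`. -/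
def Patches {d : ℕ} (X : Set (Patch d)) : Set (Patch d) :=
  {x' | x'.Finite ∧ ∃ x ∈ X, x' ⊆ x}

/-- `𝒫^N(X)`: the patches with `N` tiles contained in tilings of `X`. -/
def PatchesCard {d : ℕ} (X : Set (Patch d)) (N : ℕ) : Set (Patch d) :=
  {x' | x'.Finite ∧ x'.ncard = N ∧ ∃ x ∈ X, x' ⊆ x}

/-- `X` is invariant under the translation action. -/
def TransInvariant {d : ℕ} (X : Set (Patch d)) : Prop :=
  ∀ t : Pt d, ∀ x ∈ X, patchTrans t x ∈ X

/-- Finite local complexity: for each `N` there are only finitely many `N`-tile patches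
in tilings of `X` up to translation. -/
def FLC {d : ℕ} (X : Set (Patch d)) : Prop :=
  ∀ N : ℕ, ∃ F : Finset (Patch d),
    ∀ x' ∈ PatchesCard X N, ∃ y ∈ F, ∃ t : Pt d, patchTrans t y = x'

/-- The tiling metric `d_T`. -/
def dT {d : ℕ} (x y : Patch d) : ℝ :=
  sInf ({Real.sqrt 2 / 2} ∪
    {r : ℝ | 0 < r ∧ r < Real.sqrt 2 / 2 ∧
      ∃ x' ⊆ x, ∃ y' ⊆ y,
        Bornology.IsBounded (psupp x') ∧ Bornology.IsBounded (psupp y') ∧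
        closedBall (0 : Pt d) (1 / r) ⊆ psupp x' ∧
        closedBall (0 : Pt d) (1 / r) ⊆ psupp y' ∧
        ∃ t : Pt d, ‖t‖ ≤ r ∧ patchTrans t x' = y'})

/-- A (self-similar) substitution on the tiles of `X`, with dilatation factor `lam`,
extended tile-by-tile to patches, mapping finite patches of `X` to finite patches of `X`
and tilings of `X` to tilings of `X`. -/
structure Substitution (d : ℕ) (X : Set (Patch d)) where
  map : Set (Pt d) → Patch d
  lam : ℝ
  one_lt_lam : 1 < lam
  supp_eq : ∀ D ∈ TilesOf X, psupp (map D) = (fun p => lam • p) '' D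
  equivar : ∀ (t : Pt d) (D : Set (Pt d)), map (tileTrans t D) = patchTrans (lam • t) (map D)
  maps_patches : ∀ x' ∈ Patches X, (⋃ D ∈ x', map D) ∈ Patches X
  maps_X : ∀ x ∈ X, (⋃ D ∈ x, map D) ∈ X

/-- A substitution applied to a patch, tile by tile. -/
def substPatch {d : ℕ} {X : Set (Patch d)} (S : Substitution d X) (x : Patch d) : Patch d :=
  ⋃ D ∈ x, S.map D

/-- The structure matrix of a substitution with respect to prototiles `Dp`:
entry `(i,j)` is the number of tiles equivalent (translation-equal) to `Dp i` in `S (Dp j)`. -/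
def structMat {d l : ℕ} {X : Set (Patch d)} (Dp : Fin l → Set (Pt d)) (S : Substitution d X) :
    Matrix (Fin l) (Fin l) ℕ :=
  fun i j => {D | D ∈ S.map (Dp j) ∧ ∃ t : Pt d, D = tileTrans t (Dp i)}.ncard

/-- `Dp` is a complete family of pairwise non-equivalent prototiles of `X`. -/
def IsPrototileBasis {d l : ℕ} (X : Set (Patch d)) (Dp : Fin l → Set (Pt d)) : Prop :=
  (∀ i, Dp i ∈ TilesOf X) ∧
  (∀ i j, i ≠ j → ∀ t : Pt d, tileTrans t (Dp i) ≠ Dp j) ∧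
  ∀ D ∈ TilesOf X, ∃ i, ∃ t : Pt d, tileTrans t (Dp i) = D

/-- `S^n_ā = S_{a_1} ∘ S_{a_2} ∘ ⋯ ∘ S_{a_n}` acting on patches (`a 0` plays the role
of `a_1`). -/
def substSeq {d k : ℕ} {X : Set (Patch d)} (S : Fin k → Substitution d X) :
    (ℕ → Fin k) → ℕ → Patch d → Patch d
  | _, 0 => id
  | a, n + 1 => fun x => substPatch (S (a 0)) (substSeq S (fun i => a (i + 1)) n x)

/-- `A^n_ā = A_{a_1} A_{a_2} ⋯ A_{a_n}`. -/
def matSeq {l k : ℕ} (A : Fin k → Matrix (Fin l) (Fin l) ℕ) :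
    (ℕ → Fin k) → ℕ → Matrix (Fin l) (Fin l) ℕ
  | _, 0 => 1
  | a, n + 1 => A (a 0) * matSeq A (fun i => a (i + 1)) n

/-- Primitivity of the sequence of structure matrices `(A_{a_n})`: for every `n` some
product `A_{a_n} A_{a_{n+1}} ⋯ A_{a_{n+N}}` has all entries positive. -/
def SeqPrimitive {l k : ℕ} (A : Fin k → Matrix (Fin l) (Fin l) ℕ) (a : ℕ → Fin k) : Prop :=
  ∀ n : ℕ, ∃ N : ℕ, ∀ p q : Fin l, 0 < matSeq A (fun m => a (n + m)) (N + 1) p q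

/-- The multi-substitution tiling space `X_ā` (with initial tile `D`). -/
def multiSpace {d k : ℕ} {X : Set (Patch d)} (S : Fin k → Substitution d X) (a : ℕ → Fin k)
    (D : Set (Pt d)) : Set (Patch d) :=
  {x | x ∈ X ∧ ∀ x' ⊆ x, x'.Finite →
    ∃ n : ℕ, 0 < n ∧ ∃ t : Pt d, patchTrans t x' ⊆ substSeq S a n {D}}

/-- The substitution tiling space of a single substitution, given by its action
`F` on patches (with initial tile `D`). -/
def substSpaceF {d : ℕ} (X : Set (Patch d)) (F : Patch d → Patch d) (D : Set (Pt d)) :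
    Set (Patch d) :=
  {x | x ∈ X ∧ ∀ x' ⊆ x, x'.Finite →
    ∃ m : ℕ, 0 < m ∧ ∃ t : Pt d, patchTrans t x' ⊆ F^[m] {D}}

open Classical in
/-- The metric on `Σ = {1,…,k}^ℕ`: `d(ā,b̄) = 1/L` where `L` is the least (1-indexed)
position where the sequences differ, and `0` if they are equal. -/
def dSigma {k : ℕ} (a b : ℕ → Fin k) : ℝ :=
  if h : ∃ n, a n ≠ b n then 1 / ((Nat.find h : ℝ) + 1) else 0

/-- The shift `σ` on `Σ`. -/
def seqShift {k : ℕ} (a : ℕ → Fin k) : ℕ → Fin k := fun n => a (n + 1)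

/-- A substitution is recognizable if it is injective on `X`. -/
def Recognizable {d : ℕ} {X : Set (Patch d)} (S : Substitution d X) : Prop :=
  ∀ x ∈ X, ∀ y ∈ X, substPatch S x = substPatch S y → x = y

/-- A substitution is strongly recognizable if it is recognizable and `S(D') ⊆ S(x)`
implies `D' ∈ x` for every tiling `x ∈ X` and tile `D'`. -/
def StronglyRecognizable {d : ℕ} {X : Set (Patch d)} (S : Substitution d X) : Prop :=
  Recognizable S ∧ ∀ x ∈ X, ∀ D' ∈ TilesOf X, S.map D' ⊆ substPatch S x → D' ∈ x

/-- `L_{x'}(y')`: the number of translated copies of `x'` contained in `y'`. -/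
def Lcount {d : ℕ} (x' y' : Patch d) : ℕ := {t : Pt d | patchTrans t x' ⊆ y'}.ncard

/-- The Euclidean volume of the support of a patch. -/
def pvol {d : ℕ} (y' : Patch d) : ℝ := (volume (psupp y')).toReal

/-- `L^x_{x'}(H)`: the number of translated copies of `x'` contained in `x` whose support
is contained in `H`. -/
def LcountIn {d : ℕ} (x x' : Patch d) (H : Set (Pt d)) : ℕ :=
  {t : Pt d | patchTrans t x' ⊆ x ∧ psupp (patchTrans t x') ⊆ H}.ncard

/-- `H^{+r}`: the set of points at distance at most `r` from `H`. -/
def plusR {d : ℕ} (H : Set (Pt d)) (r : ℝ) : Set (Pt d) := {t | ∃ h ∈ H, dist t h ≤ r}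

/-- Van Hove sequence of subsets of `ℝ^d`. -/
def VanHove {d : ℕ} (H : ℕ → Set (Pt d)) : Prop :=
  ∀ r : ℝ, 0 ≤ r →
    Tendsto (fun n => (volume (plusR (frontier (H n)) r)).toReal / (volume (H n)).toReal)
      atTop (nhds 0)

/-- A tiling of `X_ā` which is an increasing union of translates of the supertiles
`S^{k_n}_ā(D)`. -/
def Hierarchical {d k : ℕ} {X : Set (Patch d)} (S : Fin k → Substitution d X) (a : ℕ → Fin k)
    (x : Patch d) : Prop :=
  ∃ (kn : ℕ → ℕ) (tn : ℕ → Pt d) (D : Set (Pt d)), D ∈ TilesOf X ∧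
    Tendsto kn atTop atTop ∧
    (∀ n, patchTrans (tn n) (substSeq S a (kn n) {D}) ⊆
      patchTrans (tn (n + 1)) (substSeq S a (kn (n + 1)) {D})) ∧
    x = ⋃ n, patchTrans (tn n) (substSeq S a (kn n) {D})

/-- The topology on the space of patches generated by the `d_T`-balls. -/
def tilingTopology (d : ℕ) : TopologicalSpace (Patch d) :=
  TopologicalSpace.generateFrom {U | ∃ (x : Patch d) (r : ℝ), 0 < r ∧ U = {y | dT x y < r}}

/-- The Borel σ-algebra associated to the tiling topology. -/
def tilingMeasurable (d : ℕ) : MeasurableSpace (Patch d) :=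
  @borel (Patch d) (tilingTopology d)

/-- A Borel probability measure concentrated on `Y` and invariant under the translation
action. -/
def GoodMeasure {d : ℕ} (Y : Set (Patch d))
    (μ : @MeasureTheory.Measure (Patch d) (tilingMeasurable d)) : Prop :=
  letI := tilingMeasurable d
  μ Set.univ = 1 ∧ μ Yᶜ = 0 ∧
    ∀ (t : Pt d) (s : Set (Patch d)), μ (patchTrans t ⁻¹' s) = μ s

/-- `ν` is the pushforward of `μ` under `F`. -/
def PushForwardEq {d : ℕ} (F : Patch d → Patch d)
    (μ ν : @MeasureTheory.Measure (Patch d) (tilingMeasurable d)) : Prop :=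
  letI := tilingMeasurable d
  ∀ s : Set (Patch d), μ (F ⁻¹' s) = ν s

/-!
Every finite patch of `y ∈ X_ā` lies, up to translation, in a supertile `S^n_ā(D)`, so it
suffices to find a translate of every `S^n_ā(D)` in `x ∈ X_ā`. Primitivity gives `N` such that
every supertile `S^{n+N+1}_ā(E)` contains a copy of `S^n_ā(D)`; by finite local complexity these
supertiles have diameter at most some `R`. The tiles of `x` meeting the ball of radius `R` lie,
up to translation, in some `S^M_ā(D)` with `M ≥ n+N+1`, which is tiled by supertiles of level
`n+N+1`; the one through the centre of the ball stays inside the ball, hence consists of tiles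
of `x`. Applied to the tiles of `y` meeting the ball of radius `1/ε`, this gives
`d_T(t + x, y) < ε`.
-/

open scoped Pointwise

variable {d k l : ℕ} {X : Set (Patch d)}

section Patches

@[simp] lemma tileTrans_zero (D : Set (Pt d)) : tileTrans 0 D = D := by
  simp [tileTrans]

lemma tileTrans_tileTrans (s t : Pt d) (D : Set (Pt d)) :
    tileTrans s (tileTrans t D) = tileTrans (s + t) D := by
  simp only [tileTrans, image_image, add_assoc]

@[simp] lemma patchTrans_zero (x : Patch d) : patchTrans 0 x = x := by
  simp [patchTrans]

lemma patchTrans_patchTrans (s t : Pt d) (x : Patch d) :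
    patchTrans s (patchTrans t x) = patchTrans (s + t) x := by
  simp only [patchTrans, image_image, tileTrans_tileTrans]

lemma patchTrans_mono (t : Pt d) {x y : Patch d} (h : x ⊆ y) :
    patchTrans t x ⊆ patchTrans t y :=
  image_mono h

lemma patchTrans_subset_iff {t : Pt d} {x y : Patch d} :
    patchTrans t x ⊆ y ↔ x ⊆ patchTrans (-t) y := by
  constructor <;> intro h
  · simpa [patchTrans_patchTrans] using patchTrans_mono (-t) h
  · simpa [patchTrans_patchTrans] using patchTrans_mono t h

lemma patchTrans_singleton (t : Pt d) (E : Set (Pt d)) :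
    patchTrans t {E} = {tileTrans t E} :=
  image_singleton

@[simp] lemma psupp_singleton (E : Set (Pt d)) : psupp ({E} : Patch d) = E := by
  simp [psupp]

lemma psupp_mono {x y : Patch d} (h : x ⊆ y) : psupp x ⊆ psupp y :=
  biUnion_subset_biUnion_left h

lemma subset_psupp {x : Patch d} {E : Set (Pt d)} (hE : E ∈ x) : E ⊆ psupp x :=
  subset_biUnion_of_mem (u := id) hE

lemma psupp_patchTrans (t : Pt d) (x : Patch d) :
    psupp (patchTrans t x) = (t + ·) '' psupp x := by
  simp only [psupp, patchTrans, biUnion_image, tileTrans, image_iUnion₂]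

lemma psupp_biUnion {ι : Type*} (s : Set ι) (f : ι → Patch d) :
    psupp (⋃ i ∈ s, f i) = ⋃ i ∈ s, psupp (f i) := by
  simp only [psupp, biUnion_iUnion]


lemma singleton_mem_patches {E : Set (Pt d)} (hE : E ∈ TilesOf X) : ({E} : Patch d) ∈ Patches X :=
  let ⟨z, hz, hEz⟩ := hE
  ⟨finite_singleton _, z, hz, singleton_subset_iff.2 hEz⟩

lemma mem_tilesOf_of_mem_patches {P : Patch d} (hP : P ∈ Patches X) {E : Set (Pt d)}
    (hE : E ∈ P) : E ∈ TilesOf X :=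
  let ⟨_, z, hz, hPz⟩ := hP
  ⟨z, hz, hPz hE⟩

end Patches

section Substitution

lemma substPatch_mono (S : Substitution d X) {x y : Patch d} (h : x ⊆ y) :
    substPatch S x ⊆ substPatch S y :=
  biUnion_subset_biUnion_left h

lemma map_subset_substPatch (S : Substitution d X) {x : Patch d} {E : Set (Pt d)} (hE : E ∈ x) :
    S.map E ⊆ substPatch S x :=
  subset_biUnion_of_mem (u := S.map) hE

lemma substPatch_patchTrans (S : Substitution d X) (t : Pt d) (x : Patch d) :
    substPatch S (patchTrans t x) = patchTrans (S.lam • t) (substPatch S x) := by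
  simp only [substPatch, patchTrans, biUnion_image, S.equivar, image_iUnion₂]

lemma psupp_substPatch (S : Substitution d X) {x : Patch d} (h : x ∈ Patches X) :
    psupp (substPatch S x) = (S.lam • ·) '' psupp x := by
  rw [substPatch, psupp_biUnion, psupp, image_iUnion₂]
  exact iUnion₂_congr fun E hE => S.supp_eq E (mem_tilesOf_of_mem_patches h hE)

/-- The dilatation factor `λ_{a_1} ⋯ λ_{a_n}` of `S^n_ā`. -/
def lamSeq (S : Fin k → Substitution d X) : (ℕ → Fin k) → ℕ → ℝ
  | _, 0 => 1
  | a, n + 1 => (S (a 0)).lam * lamSeq S (fun i => a (i + 1)) n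

variable (S : Fin k → Substitution d X)

lemma lamSeq_pos (a : ℕ → Fin k) (n : ℕ) : 0 < lamSeq S a n := by
  induction n generalizing a with
  | zero => exact one_pos
  | succ n ih => exact mul_pos (zero_lt_one.trans (S (a 0)).one_lt_lam) (ih _)

lemma substSeq_mono (a : ℕ → Fin k) (n : ℕ) {x y : Patch d} (h : x ⊆ y) :
    substSeq S a n x ⊆ substSeq S a n y := by
  induction n generalizing a with
  | zero => exact h
  | succ n ih => exact substPatch_mono _ (ih _)

lemma substSeq_mem_patches (a : ℕ → Fin k) (n : ℕ) {x : Patch d} (h : x ∈ Patches X) :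
    substSeq S a n x ∈ Patches X := by
  induction n generalizing a with
  | zero => exact h
  | succ n ih => exact (S (a 0)).maps_patches _ (ih _)

lemma substSeq_patchTrans (a : ℕ → Fin k) (n : ℕ) (t : Pt d) (x : Patch d) :
    substSeq S a n (patchTrans t x) = patchTrans (lamSeq S a n • t) (substSeq S a n x) := by
  induction n generalizing a with
  | zero => simp [substSeq, lamSeq]
  | succ n ih => simp only [substSeq, lamSeq, ih, substPatch_patchTrans, smul_smul]

lemma substSeq_singleton_tileTrans (a : ℕ → Fin k) (n : ℕ) (t : Pt d) (E : Set (Pt d)) :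
    substSeq S a n {tileTrans t E} = patchTrans (lamSeq S a n • t) (substSeq S a n {E}) := by
  rw [← patchTrans_singleton, substSeq_patchTrans]

lemma substSeq_add (a : ℕ → Fin k) (n m : ℕ) (x : Patch d) :
    substSeq S a (n + m) x = substSeq S a n (substSeq S (fun i => a (n + i)) m x) := by
  induction n generalizing a with
  | zero => simp [substSeq]
  | succ n ih =>
    rw [Nat.add_right_comm]
    simp only [substSeq, ih, Nat.add_right_comm _ 1]

lemma substSeq_eq_biUnion (a : ℕ → Fin k) (n : ℕ) (x : Patch d) :
    substSeq S a n x = ⋃ E ∈ x, substSeq S a n {E} := by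
  induction n generalizing a x with
  | zero => exact (biUnion_of_singleton x).symm
  | succ n ih =>
    simp only [substSeq, substPatch]
    rw [ih]
    simp only [biUnion_iUnion]

lemma psupp_substSeq (a : ℕ → Fin k) (n : ℕ) {x : Patch d} (h : x ∈ Patches X) :
    psupp (substSeq S a n x) = (lamSeq S a n • ·) '' psupp x := by
  induction n generalizing a with
  | zero => simp [substSeq, lamSeq]
  | succ n ih =>
    rw [substSeq, psupp_substPatch _ (substSeq_mem_patches S _ n h), ih, image_image]
    simp only [lamSeq, smul_smul]

end Substitution

section Primitivity

variable (S : Fin k → Substitution d X) (a : ℕ → Fin k)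

lemma exists_tileTrans_mem_substSeq_of_matSeq_pos (Dp : Fin l → Set (Pt d)) (n : ℕ)
    (i j : Fin l) (h : 0 < matSeq (fun i => structMat Dp (S i)) a n i j) :
    ∃ w : Pt d, tileTrans w (Dp i) ∈ substSeq S a n {Dp j} := by
  induction n generalizing a i j with
  | zero =>
    obtain rfl : i = j := by
      by_contra hij
      simp [matSeq, Matrix.one_apply_ne hij] at h
    exact ⟨0, by simp [substSeq]⟩
  | succ n ih =>
    rw [matSeq, Matrix.mul_apply] at h
    obtain ⟨m, -, hm⟩ := Finset.exists_ne_zero_of_sum_ne_zero h.ne'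
    obtain ⟨hA, hrest⟩ := Nat.mul_ne_zero_iff.mp hm
    obtain ⟨w, hw⟩ := ih _ m j (Nat.pos_of_ne_zero hrest)
    obtain ⟨G, hG, v, rfl⟩ := nonempty_of_ncard_ne_zero hA
    refine ⟨(S (a 0)).lam • w + v, map_subset_substPatch _ hw ?_⟩
    rw [(S (a 0)).equivar, ← tileTrans_tileTrans]
    exact mem_image_of_mem _ hG

variable {S a} {Dp : Fin l → Set (Pt d)} {D : Set (Pt d)}

/-- A positive entry of `A_{a_{n+1}} ⋯ A_{a_{n+N+1}}` puts a translate of `D` into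
`S^{N+1}_{σ^n ā}(E)`; then apply `S^n_ā`. -/
lemma exists_patchTrans_substSeq_subset_substSeq (hDp : IsPrototileBasis X Dp)
    (hprim : SeqPrimitive (fun i => structMat Dp (S i)) a) (hD : D ∈ TilesOf X) (n : ℕ) :
    ∃ N, ∀ E ∈ TilesOf X, ∃ v : Pt d,
      patchTrans v (substSeq S a n {D}) ⊆ substSeq S a (n + (N + 1)) {E} := by
  obtain ⟨N, hN⟩ := hprim n
  refine ⟨N, fun E hE => ?_⟩
  obtain ⟨i, t, rfl⟩ := hDp.2.2 D hD
  obtain ⟨j, s, rfl⟩ := hDp.2.2 E hE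
  obtain ⟨w, hw⟩ := exists_tileTrans_mem_substSeq_of_matSeq_pos S _ Dp (N + 1) i j (hN i j)
  refine ⟨lamSeq S a (n + (N + 1)) • s + lamSeq S a n • (w - t), ?_⟩
  have hcopy : tileTrans (w - t) (tileTrans t (Dp i)) ∈
      substSeq S (fun m => a (n + m)) (N + 1) {Dp j} := by
    rwa [tileTrans_tileTrans, sub_add_cancel]
  rw [substSeq_singleton_tileTrans S a (n + (N + 1)), ← patchTrans_patchTrans,
    ← substSeq_singleton_tileTrans, substSeq_add]
  exact patchTrans_mono _ (substSeq_mono S a n (singleton_subset_iff.mpr hcopy))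

lemma exists_patchTrans_subset_substSeq_ge (hDp : IsPrototileBasis X Dp)
    (hprim : SeqPrimitive (fun i => structMat Dp (S i)) a) (hD : D ∈ TilesOf X)
    {P : Patch d} {M : ℕ} {u : Pt d} (hP : patchTrans u P ⊆ substSeq S a M {D}) (j : ℕ) :
    ∃ M' ≥ j, ∃ u' : Pt d, patchTrans u' P ⊆ substSeq S a M' {D} := by
  induction j with
  | zero => exact ⟨M, Nat.zero_le _, u, hP⟩
  | succ j ih =>
    obtain ⟨M', hM', u', hu'⟩ := ih
    obtain ⟨N, hN⟩ := exists_patchTrans_substSeq_subset_substSeq hDp hprim hD M'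
    obtain ⟨v, hv⟩ := hN D hD
    exact ⟨M' + (N + 1), by omega, v + u',
      (patchTrans_patchTrans v u' P ▸ patchTrans_mono v hu').trans hv⟩

end Primitivity

section Geometry

lemma IsTile.interior_nonempty {E : Set (Pt d)} (h : IsTile E) : (interior E).Nonempty := by
  rw [nonempty_iff_ne_empty]
  intro he
  have hE := h.2.2
  rw [he, closure_empty] at hE
  exact h.2.1.nonempty.ne_empty hE

lemma eq_empty_of_isOpen_subset_biUnion {α : Type*} [TopologicalSpace α] {P : Set (Set α)}
    (hP : P.Finite) (hclosed : ∀ G ∈ P, IsClosed G) {U : Set α} (hU : IsOpen U)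
    (hcover : U ⊆ ⋃ G ∈ P, G) (hdisj : ∀ G ∈ P, Disjoint U (interior G)) : U = ∅ := by
  induction P, hP using Set.Finite.induction_on generalizing U with
  | empty => simpa using hcover
  | @insert G P _ _ ih =>
    have hG := hclosed G (mem_insert _ _)
    have hUG : U \ G = ∅ := by
      refine ih (fun H hH => hclosed H (mem_insert_of_mem _ hH)) (hU.sdiff hG) ?_
        fun H hH => (hdisj H (mem_insert_of_mem _ hH)).mono_left sdiff_subset
      intro p hp
      have hp' := hcover hp.1
      rw [biUnion_insert] at hp'
      exact hp'.resolve_left hp.2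
    have hUint : U ⊆ interior G := hU.subset_interior_iff.mpr (sdiff_eq_empty.mp hUG)
    exact (hdisj G (mem_insert _ _)).eq_bot_of_le hUint

/-- Otherwise the interior of a tile of `W \ P` would be covered by the boundaries of the
finitely many tiles of `P`. -/
lemma IsPatch.subset_of_psupp_subset {z P W : Patch d} (hz : IsPatch z) (hPz : P ⊆ z)
    (hP : P.Finite) (hWz : W ⊆ z) (hWP : psupp W ⊆ psupp P) : W ⊆ P := by
  intro F hF
  by_contra hFP
  refine (hz.1 F (hWz hF)).interior_nonempty.ne_empty <|
    eq_empty_of_isOpen_subset_biUnion hP (fun G hG => (hz.1 G (hPz hG)).1.isClosed)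
      isOpen_interior (interior_subset.trans ((subset_psupp hF).trans hWP)) fun G hG => ?_
  exact disjoint_iff_inter_eq_empty.mpr
    (hz.2 F (hWz hF) G (hPz hG) fun hFG => hFP (hFG ▸ hG))

lemma IsPatch.isBounded_psupp {x P : Patch d} (hx : IsPatch x) (hPx : P ⊆ x)
    (hP : P.Finite) : Bornology.IsBounded (psupp P) :=
  (Bornology.isBounded_biUnion hP).2 fun E hE => (hx.1 E (hPx hE)).1.isBounded

lemma volume_interior_tileTrans (t : Pt d) (E : Set (Pt d)) :
    volume (interior (tileTrans t E)) = volume (interior E) := by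
  rw [tileTrans, ← Homeomorph.coe_addLeft, ← (Homeomorph.addLeft t).image_interior,
    Homeomorph.coe_addLeft, image_add_left, measure_preimage_add]

lemma finite_of_pairwise_disjoint_interior {α : Type*} [TopologicalSpace α] [MeasurableSpace α]
    [OpensMeasurableSpace α] (μ : Measure α) {C : Set (Set α)} {B : Set α} {v : ENNReal}
    (hv : 0 < v) (hB : μ B ≠ ⊤) (hCB : ∀ E ∈ C, E ⊆ B)
    (hdisj : C.Pairwise fun E F => Disjoint (interior E) (interior F)) (hvol : ∀ E ∈ C, v ≤ μ (interior E)) :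
    C.Finite := by
  have hfin := Measure.finite_const_le_meas_of_disjoint_iUnion μ hv
    (As := fun E : C => interior (E : Set α)) (fun _ => isOpen_interior.measurableSet)
    (fun E F hEF => hdisj E.2 F.2 (Subtype.coe_ne_coe.mpr hEF))
    (ne_top_of_le_ne_top hB
      (measure_mono (iUnion_subset fun E => interior_subset.trans (hCB E E.2))))
  have hall : {E : C | v ≤ μ (interior (E : Set α))} = univ := eq_univ_of_forall fun E => hvol E E.2
  rw [hall] at hfin
  exact finite_coe_iff.mp (finite_univ_iff.mp hfin)

lemma dT_le_of_subset {x y y' : Patch d} {r : ℝ} (hr : 0 < r) (hr' : r < √2 / 2)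
    (hx : y' ⊆ x) (hy : y' ⊆ y) (hbdd : Bornology.IsBounded (psupp y'))
    (hball : closedBall 0 (1 / r) ⊆ psupp y') : dT x y ≤ r := by
  refine csInf_le ⟨0, ?_⟩ (Or.inr ⟨hr, hr', y', hx, y', hy, hbdd, hbdd, hball, hball, 0,
    by simpa using hr.le, patchTrans_zero _⟩)
  rintro ρ (rfl | hρ)
  · positivity
  · exact hρ.1.le

end Geometry

section LocalComplexity

lemma FLC.exists_finset_tileTrans (hXflc : FLC X) :
    ∃ K : Finset (Set (Pt d)), ∀ E ∈ TilesOf X, ∃ K₀ ∈ K, ∃ t : Pt d, E = tileTrans t K₀ := by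
  classical
  obtain ⟨F, hF⟩ := hXflc 1
  refine ⟨F.image psupp, fun E ⟨x, hx, hE⟩ => ?_⟩
  obtain ⟨y, hy, t, hty⟩ :=
    hF {E} ⟨finite_singleton _, ncard_singleton _, x, hx, singleton_subset_iff.2 hE⟩
  refine ⟨psupp y, Finset.mem_image_of_mem _ hy, t, ?_⟩
  rw [← psupp_singleton E, ← hty, psupp_patchTrans, tileTrans]

lemma FLC.exists_diam_le (hXflc : FLC X) :
    ∃ Δ, 0 ≤ Δ ∧ ∀ E ∈ TilesOf X, diam E ≤ Δ := by
  obtain ⟨K, hK⟩ := hXflc.exists_finset_tileTrans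
  refine ⟨∑ K₀ ∈ K, diam K₀, Finset.sum_nonneg fun _ _ => diam_nonneg, fun E hE => ?_⟩
  obtain ⟨K₀, hK₀, t, rfl⟩ := hK E hE
  calc diam (tileTrans t K₀) = diam K₀ := (IsometryEquiv.addLeft t).diam_image K₀
    _ ≤ ∑ K₁ ∈ K, diam K₁ := Finset.single_le_sum (f := diam) (fun _ _ => diam_nonneg) hK₀

def tilesMeeting (x : Patch d) (B : Set (Pt d)) : Patch d := {E ∈ x | (E ∩ B).Nonempty}

lemma tilesMeeting_subset (x : Patch d) (B : Set (Pt d)) : tilesMeeting x B ⊆ x :=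
  sep_subset _ _

lemma subset_psupp_tilesMeeting {x : Patch d} (hx : IsTiling x) (B : Set (Pt d)) :
    B ⊆ psupp (tilesMeeting x B) := by
  intro p hp
  obtain ⟨E, hE, hpE⟩ := mem_iUnion₂.mp (hx.2.symm ▸ mem_univ p : p ∈ psupp x)
  exact subset_psupp (show E ∈ tilesMeeting x B from ⟨hE, p, hpE, hp⟩) hpE

lemma finite_tilesMeeting (hX : ∀ x ∈ X, IsTiling x) (hXflc : FLC X) {x : Patch d} (hx : x ∈ X)
    {B : Set (Pt d)} (hB : Bornology.IsBounded B) : (tilesMeeting x B).Finite := by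
  obtain ⟨K, hK⟩ := hXflc.exists_finset_tileTrans
  obtain ⟨Δ, -, hΔ⟩ := hXflc.exists_diam_le
  obtain ⟨ρ, hρ⟩ := hB.subset_closedBall 0
  have hball : ∀ E ∈ tilesMeeting x B, E ⊆ closedBall 0 (ρ + Δ) := by
    rintro E ⟨hEx, p, hpE, hpB⟩ q hq
    calc dist q 0 ≤ dist q p + dist p 0 := dist_triangle _ _ _
      _ ≤ Δ + ρ := add_le_add
          ((dist_le_diam_of_mem ((hX x hx).1.1 E hEx).1.isBounded hq hpE).trans
            (hΔ E ⟨x, hx, hEx⟩)) (hρ hpB)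
      _ = ρ + Δ := add_comm _ _
  refine (K.finite_toSet.biUnion
    (t := fun K₀ => {E | E ∈ tilesMeeting x B ∧ ∃ t : Pt d, E = tileTrans t K₀})
    fun K₀ _ => ?_).subset fun E hE => ?_
  · rcases eq_empty_or_nonempty {E | E ∈ tilesMeeting x B ∧ ∃ t : Pt d, E = tileTrans t K₀}
      with hempty | ⟨E₁, hE₁, t₁, rfl⟩
    · simp [hempty]
    refine finite_of_pairwise_disjoint_interior volume (v := volume (interior K₀)) ?_
      measure_closedBall_lt_top.ne (fun E hE => hball E hE.1)
      (fun E hE F hF hEF => disjoint_iff_inter_eq_empty.mpr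
        ((hX x hx).1.2 E hE.1.1 F hF.1.1 hEF)) ?_
    · rw [← volume_interior_tileTrans t₁]
      exact isOpen_interior.measure_pos volume ((hX x hx).1.1 _ hE₁.1).interior_nonempty
    · rintro E ⟨-, t, rfl⟩
      rw [volume_interior_tileTrans]
  · obtain ⟨K₀, hK₀, t, ht⟩ := hK E ⟨x, hx, hE.1⟩
    exact mem_biUnion (Finset.mem_coe.mpr hK₀) ⟨hE, t, ht⟩

end LocalComplexity

section Supertiles

variable {S : Fin k → Substitution d X} {a : ℕ → Fin k} {D : Set (Pt d)}

/-- `S^{m+j}_ā(D)` is tiled by level-`m` supertiles of diameter `≤ lamSeq S a m * Δ`; the one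
through the centre of the ball stays inside the ball. -/
lemma exists_substSeq_subset_of_closedBall_subset (hX : ∀ x ∈ X, IsTiling x) {Δ : ℝ}
    (hΔ : ∀ E ∈ TilesOf X, diam E ≤ Δ) (hD : D ∈ TilesOf X) {m j : ℕ} {P : Patch d}
    (hP : P ⊆ substSeq S a (m + j) {D}) {c : Pt d}
    (hball : closedBall c (lamSeq S a m * Δ) ⊆ psupp P) :
    ∃ E ∈ TilesOf X, substSeq S a m {E} ⊆ P := by
  have hΛ := (lamSeq_pos S a m).le
  have hW := substSeq_mem_patches S a (m + j) (singleton_mem_patches hD)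
  obtain ⟨hWfin, z, hz, hWz⟩ := hW
  have hQ := substSeq_mem_patches S (fun i => a (m + i)) j (singleton_mem_patches hD)
  rw [substSeq_add] at hP hWz hWfin
  have hc := psupp_mono hP
    (hball (mem_closedBall_self (mul_nonneg hΛ (diam_nonneg.trans (hΔ D hD)))))
  rw [substSeq_eq_biUnion, psupp_biUnion] at hc
  obtain ⟨E, hEQ, hcE⟩ := mem_iUnion₂.mp hc
  have hE := mem_tilesOf_of_mem_patches hQ hEQ
  have hEz : substSeq S a m {E} ⊆ z := by
    rw [substSeq_eq_biUnion] at hWz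
    exact (subset_biUnion_of_mem (u := fun E => substSeq S a m {E}) hEQ).trans hWz
  have hsupp : psupp (substSeq S a m {E}) = lamSeq S a m • E := by
    rw [psupp_substSeq S a m (singleton_mem_patches hE), psupp_singleton, image_smul]
  have hEtile : IsTile E := let ⟨x, hx, hEx⟩ := hE; (hX x hx).1.1 E hEx
  refine ⟨E, hE, (hX z hz).1.subset_of_psupp_subset (hP.trans hWz) (hWfin.subset hP) hEz
    (subset_trans (fun p hp => mem_closedBall.mpr ?_) hball)⟩
  rw [hsupp] at hp hcE
  calc dist p c ≤ diam (lamSeq S a m • E) :=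
        dist_le_diam_of_mem (hEtile.1.isBounded.smul₀ _) hp hcE
    _ = lamSeq S a m * diam E := by rw [diam_smul₀, Real.norm_of_nonneg hΛ]
    _ ≤ lamSeq S a m * Δ := mul_le_mul_of_nonneg_left (hΔ E hE) hΛ

lemma exists_patchTrans_substSeq_subset_of_mem_multiSpace (hX : ∀ x ∈ X, IsTiling x)
    (hXflc : FLC X) {Dp : Fin l → Set (Pt d)} (hDp : IsPrototileBasis X Dp)
    (hprim : SeqPrimitive (fun i => structMat Dp (S i)) a) (hD : D ∈ TilesOf X)
    {x : Patch d} (hx : x ∈ multiSpace S a D) (n : ℕ) :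
    ∃ t : Pt d, patchTrans t (substSeq S a n {D}) ⊆ x := by
  obtain ⟨Δ, -, hΔ⟩ := hXflc.exists_diam_le
  obtain ⟨N, hN⟩ := exists_patchTrans_substSeq_subset_substSeq hDp hprim hD n
  set R := lamSeq S a (n + (N + 1)) * Δ
  obtain ⟨M, -, u, hu⟩ := hx.2 (tilesMeeting x (closedBall 0 R)) (tilesMeeting_subset _ _)
    (finite_tilesMeeting hX hXflc hx.1 isBounded_closedBall)
  obtain ⟨M', hM', u', hu'⟩ := exists_patchTrans_subset_substSeq_ge hDp hprim hD hu (n + (N + 1))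
  obtain ⟨j, rfl⟩ := Nat.exists_eq_add_of_le hM'
  have hball : closedBall u' R ⊆ psupp (patchTrans u' (tilesMeeting x (closedBall 0 R))) := by
    intro p hp
    rw [psupp_patchTrans]
    refine ⟨p - u', subset_psupp_tilesMeeting (hX x hx.1) _ ?_, add_sub_cancel _ _⟩
    rwa [mem_closedBall_zero_iff, ← mem_closedBall_iff_norm]
  obtain ⟨E, hE, hEsub⟩ := exists_substSeq_subset_of_closedBall_subset hX hΔ hD hu' hball
  obtain ⟨v, hv⟩ := hN E hE
  refine ⟨-u' + v, ?_⟩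
  rw [← patchTrans_patchTrans, patchTrans_subset_iff, neg_neg]
  exact hv.trans (hEsub.trans (patchTrans_mono u' (tilesMeeting_subset _ _)))

end Supertiles

theorem multiSpace_minimal_general
    {d l k : ℕ}
    (X : Set (Patch d)) (hX : ∀ x ∈ X, IsTiling x)
    (hXflc : FLC X)
    (Dp : Fin l → Set (Pt d)) (hDp : IsPrototileBasis X Dp)
    (S : Fin k → Substitution d X)
    (D : Set (Pt d)) (hD : D ∈ TilesOf X)
    (a : ℕ → Fin k)
    (hprim : SeqPrimitive (fun i => structMat Dp (S i)) a)
    :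
    ∀ x ∈ multiSpace S a D, ∀ y ∈ multiSpace S a D, ∀ ε : ℝ, 0 < ε →
      ∃ t : Pt d, dT (patchTrans t x) y < ε := by
  intro x hx y hy ε hε
  obtain ⟨r, hr, hrε, hr'⟩ : ∃ r, 0 < r ∧ r < ε ∧ r < √2 / 2 := by
    obtain ⟨r, hr, hrm⟩ := exists_between (lt_min hε (by positivity : (0 : ℝ) < √2 / 2))
    exact ⟨r, hr, hrm.trans_le (min_le_left _ _), hrm.trans_le (min_le_right _ _)⟩
  set y' := tilesMeeting y (closedBall 0 (1 / r))
  have hy'y : y' ⊆ y := tilesMeeting_subset _ _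
  have hy' : y'.Finite := finite_tilesMeeting hX hXflc hy.1 isBounded_closedBall
  obtain ⟨n, -, s, hs⟩ := hy.2 y' hy'y hy'
  obtain ⟨t, ht⟩ :=
    exists_patchTrans_substSeq_subset_of_mem_multiSpace hX hXflc hDp hprim hD hx n
  have hy'x : y' ⊆ patchTrans (-(t + s)) x := by
    rw [← patchTrans_subset_iff, ← patchTrans_patchTrans]
    exact (patchTrans_mono t hs).trans ht
  refine ⟨-(t + s), lt_of_le_of_lt ?_ hrε⟩
  exact dT_le_of_subset hr hr' hy'x hy'y ((hX y hy.1).1.isBounded_psupp hy'y hy')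
    (subset_psupp_tilesMeeting (hX y hy.1) _)

/-- The translation dynamical system `(X_ā, T)` is minimal: every orbit is dense. -/
theorem multiSpace_minimal
    {d l k : ℕ} (hd : 0 < d) (hl : 0 < l) (hk : 0 < k)
    (X : Set (Patch d)) (hX : ∀ x ∈ X, IsTiling x)
    (hXinv : TransInvariant X) (hXflc : FLC X)
    (Dp : Fin l → Set (Pt d)) (hDp : IsPrototileBasis X Dp)
    (S : Fin k → Substitution d X)
    (D : Set (Pt d)) (hD : D ∈ TilesOf X)
    (a : ℕ → Fin k)
    (hprim : SeqPrimitive (fun i => structMat Dp (S i)) a)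
    :
    ∀ x ∈ multiSpace S a D, ∀ y ∈ multiSpace S a D, ∀ ε : ℝ, 0 < ε →
      ∃ t : Pt d, dT (patchTrans t x) y < ε :=
  multiSpace_minimal_general X hX hXflc Dp hDp S D hD a hprim

end
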